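/- arXiv:2204.07520 — 7 statements merged into one kernel-verified Lean document; each statement's English description precedes it below -/
import Mathlib

section
/- The coverage function is 2nd-order submodular: given a finite universe U and a map c : V → 2^U assigning to each element of V a covered subset of U, the function f(A) := |⋃_{v∈A} c(v)| satisfies f(s) − f(s | A) ≥ f(s | B) − f(s | A ∪ B) for all disjoint A, B ⊆ V and all s ∈ V. -/
/-- The coverage function `f(A) = |⋃_{v ∈ A} c(v)|` is 2nd-order submodular:
`f(s) - f(s | A) ≥ f(s | B) - f(s | A ∪ B)` for all disjoint `A, B` and all `s`. -/
theorem coverage_second_order_submodular {V U : Type*}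
    [DecidableEq V] [DecidableEq U] [Fintype V] [Fintype U]
    (c : V → Finset U) (A B : Finset V) (s : V) (hAB : Disjoint A B) :
    ((((insert s B).biUnion c).card : ℝ) - ((B.biUnion c).card : ℝ))
      - ((((insert s (A ∪ B)).biUnion c).card : ℝ) - (((A ∪ B).biUnion c).card : ℝ))
    ≤ ((({s} : Finset V).biUnion c).card : ℝ)
      - ((((insert s A).biUnion c).card : ℝ) - ((A.biUnion c).card : ℝ)) := by
  set P := c s with hP
  set a := A.biUnion c with ha
  set b := B.biUnion c with hb
  have hins : ∀ X : Finset V, (insert s X).biUnion c = P ∪ X.biUnion c := by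
    intro X; rw [Finset.biUnion_insert]
  have hun : (A ∪ B).biUnion c = a ∪ b := by ext x; simp [ha, hb, Finset.mem_biUnion, or_and_right, exists_or]
  rw [hins A, hins B, hins (A ∪ B), hun, Finset.singleton_biUnion]
  have h1 : (P ∪ a).card + (P ∩ a).card = P.card + a.card :=
    Finset.card_union_add_card_inter _ _
  have h2 : (P ∪ b).card + (P ∩ b).card = P.card + b.card :=
    Finset.card_union_add_card_inter _ _
  have h3 : (P ∪ (a ∪ b)).card + (P ∩ (a ∪ b)).card = P.card + (a ∪ b).card :=
    Finset.card_union_add_card_inter _ _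
  have h4 : (P ∩ (a ∪ b)).card ≤ (P ∩ a).card + (P ∩ b).card := by
    rw [Finset.inter_union_distrib_left]
    exact Finset.card_union_le _ _
  have h5 : ((a ∪ b).card : ℝ) ≤ (a.card : ℝ) + (b.card : ℝ) := by
    exact_mod_cast Finset.card_union_le a b
  have h1' : ((P ∪ a).card : ℝ) + ((P ∩ a).card : ℝ) = (P.card : ℝ) + (a.card : ℝ) := by
    exact_mod_cast h1
  have h2' : ((P ∪ b).card : ℝ) + ((P ∩ b).card : ℝ) = (P.card : ℝ) + (b.card : ℝ) := by
    exact_mod_cast h2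
  have h3' : ((P ∪ (a ∪ b)).card : ℝ) + ((P ∩ (a ∪ b)).card : ℝ)
      = (P.card : ℝ) + ((a ∪ b).card : ℝ) := by exact_mod_cast h3
  have h4' : ((P ∩ (a ∪ b)).card : ℝ) ≤ ((P ∩ a).card : ℝ) + ((P ∩ b).card : ℝ) := by
    exact_mod_cast h4
  linarith
end

section
/- If f : 2^V → ℝ is 2nd-order submodular, then for any s ∈ V, any set A ⊆ V disjoint from {s}, and any finite collection of pairwise disjoint sets B₁,…,B_k each disjoint from A and {s}, it holds that f(s) − f(s | B₁ ∪ ⋯ ∪ B_k) ≤ Σ_{j=1}^{k} [f(s) − f(s | B_j)]. -/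
lemma biUnion_fin_succ {α : Type*} [DecidableEq α] (k : ℕ) (Bf : Fin (k+1) → Finset α) :
    Finset.univ.biUnion Bf
      = (Finset.univ.biUnion (fun i : Fin k => Bf i.castSucc)) ∪ Bf (Fin.last k) := by
  ext a
  simp only [Finset.mem_biUnion, Finset.mem_univ, true_and, Finset.mem_union]
  constructor
  · rintro ⟨i, hi⟩
    rcases Fin.lastCases (motive := fun i => a ∈ Bf i → (∃ j : Fin k, a ∈ Bf j.castSucc) ∨ a ∈ Bf (Fin.last k))
      (fun h => Or.inr h) (fun j h => Or.inl ⟨j, h⟩) i hi with h | h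
    · exact Or.inl h
    · exact Or.inr h
  · rintro (⟨j, hj⟩ | h)
    · exact ⟨j.castSucc, hj⟩
    · exact ⟨Fin.last k, h⟩

/-- If `f` is normalized, submodular and 2nd-order submodular, then for any `s`,
any `A` disjoint from `{s}`, and any pairwise disjoint sets `B₁, …, B_k` each disjoint
from `A` and `{s}`, we have
`f(s) - f(s | B₁ ∪ ⋯ ∪ B_k) ≤ Σ_j [f(s) - f(s | B_j)]`. -/
theorem second_order_overlap_subadditive {α : Type*} [DecidableEq α] [Fintype α]
    (f : Finset α → ℝ)
    (hnorm : f ∅ = 0)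
    (hsub : ∀ (A B : Finset α) (s : α), A ⊆ B →
      f (insert s B) - f B ≤ f (insert s A) - f A)
    (h2 : ∀ (A B : Finset α) (s : α), Disjoint A B →
      (f (insert s B) - f B) - (f (insert s (A ∪ B)) - f (A ∪ B))
        ≤ f {s} - (f (insert s A) - f A))
    (s : α) (A : Finset α) (hsA : s ∉ A)
    (k : ℕ) (Bf : Fin k → Finset α)
    (hpair : ∀ i j : Fin k, i ≠ j → Disjoint (Bf i) (Bf j))
    (hBA : ∀ j : Fin k, Disjoint (Bf j) A)
    (hBs : ∀ j : Fin k, s ∉ Bf j) :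
    f {s} - (f (insert s (Finset.univ.biUnion Bf)) - f (Finset.univ.biUnion Bf))
      ≤ ∑ j : Fin k, (f {s} - (f (insert s (Bf j)) - f (Bf j))) := by
  induction k with
  | zero =>
      simp [hnorm]
  | succ k ih =>
      set U := Finset.univ.biUnion (fun i : Fin k => Bf i.castSucc) with hU
      set B := Bf (Fin.last k) with hB
      have hdisj : Disjoint U B := by
        rw [hU, Finset.disjoint_biUnion_left]
        intro i _
        exact hpair i.castSucc (Fin.last k) (by simp [Fin.ext_iff, Fin.castSucc_lt_last i |>.ne])
      have key := h2 U B s hdisj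
      have hIH := ih (fun i => Bf i.castSucc)
        (fun i j hij => hpair _ _ (by simpa [Fin.ext_iff] using (by
          intro h; exact hij (Fin.ext h) : (i : ℕ) ≠ (j : ℕ))))
        (fun j => hBA _) (fun j => hBs _)
      rw [biUnion_fin_succ k Bf, ← hU, ← hB]
      rw [Fin.sum_univ_castSucc]
      have := hIH
      linarith
end

section
/- Consider n agents, each agent i with a nonempty finite action set V_i, and a normalized non-decreasing submodular function f on subsets of the disjoint union of the V_i. Suppose the agents select actions sequentially in some order σ(1),…,σ(n), where agent σ(k) greedily picks s_{σ(k)} ∈ V_{σ(k)} maximizing the marginal gain f(s | {s_{σ(1)},…,s_{σ(k−1)}}). Then the resulting set S of selected actions satisfies f(S) ≥ (1/2) f(S*), where S* is any feasible selection (one action per agent). -/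
/-- Sequential greedy 1/2-guarantee: `n` agents with pairwise disjoint nonempty action
sets `Vs i` select actions in an order given by a permutation `σ`, each greedily
maximizing its marginal gain given the previously selected actions.  Then the selected
set `S` satisfies `f(S) ≥ (1/2) f(S*)` for any feasible selection `S*`. -/
theorem sequential_greedy_half {α : Type*} [DecidableEq α] [Fintype α] (n : ℕ)
    (Vs : Fin n → Finset α)
    (hne : ∀ i, (Vs i).Nonempty)
    (hdisjV : ∀ i j : Fin n, i ≠ j → Disjoint (Vs i) (Vs j))
    (f : Finset α → ℝ)
    (hnorm : f ∅ = 0)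
    (hmono : ∀ A B : Finset α, A ⊆ B → f A ≤ f B)
    (hsub : ∀ (A B : Finset α) (s : α), A ⊆ B →
      f (insert s B) - f B ≤ f (insert s A) - f A)
    (σ : Equiv.Perm (Fin n))
    (s : Fin n → α) (hs : ∀ i, s i ∈ Vs i)
    (hgreedy : ∀ k : Fin n, ∀ y ∈ Vs (σ k),
      f (insert y ((Finset.univ.filter (fun j => j < k)).image (fun j => s (σ j))))
        - f ((Finset.univ.filter (fun j => j < k)).image (fun j => s (σ j)))
      ≤ f (insert (s (σ k)) ((Finset.univ.filter (fun j => j < k)).image (fun j => s (σ j))))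
        - f ((Finset.univ.filter (fun j => j < k)).image (fun j => s (σ j)))) :
    ∀ t : Fin n → α, (∀ i, t i ∈ Vs i) →
      (1 / 2 : ℝ) * f (Finset.univ.image t) ≤ f (Finset.univ.image s) := by

  intro t ht
  classical
  set S : ℕ → Finset α := fun k =>
    (Finset.univ.filter (fun j : Fin n => (j : ℕ) < k)).image (fun j => s (σ j)) with hSdef
  set T : ℕ → Finset α := fun k =>
    (Finset.univ.filter (fun j : Fin n => (j : ℕ) < k)).image (fun j => t (σ j)) with hTdef
  have hfull : ∀ (u : Fin n → α),
      (Finset.univ.filter (fun j : Fin n => (j : ℕ) < n)).image (fun j => u (σ j))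
        = Finset.univ.image u := by
    intro u
    have h1 : (Finset.univ.filter (fun j : Fin n => (j : ℕ) < n)) = Finset.univ := by
      ext j; simp [j.isLt]
    rw [h1]
    ext x
    simp only [Finset.mem_image, Finset.mem_univ, true_and]
    constructor
    · rintro ⟨j, rfl⟩; exact ⟨σ j, rfl⟩
    · rintro ⟨j, rfl⟩; exact ⟨σ.symm j, by simp⟩
  have hfilter_succ : ∀ k (hk : k < n),
      (Finset.univ.filter (fun j : Fin n => (j : ℕ) < k + 1))
        = insert ⟨k, hk⟩ (Finset.univ.filter (fun j : Fin n => (j : ℕ) < k)) := by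
    intro k hk
    ext j
    simp only [Finset.mem_filter, Finset.mem_univ, true_and, Finset.mem_insert, Fin.ext_iff]
    omega
  have hSsucc : ∀ k (hk : k < n), S (k + 1) = insert (s (σ ⟨k, hk⟩)) (S k) := by
    intro k hk
    simp only [hSdef, hfilter_succ k hk, Finset.image_insert]
  have hTsucc : ∀ k (hk : k < n), T (k + 1) = insert (t (σ ⟨k, hk⟩)) (T k) := by
    intro k hk
    simp only [hTdef, hfilter_succ k hk, Finset.image_insert]
  have hSsub : ∀ k, S k ⊆ S n := by
    intro k
    apply Finset.image_subset_image
    intro j hj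
    simp only [Finset.mem_filter, Finset.mem_univ, true_and] at hj ⊢
    exact j.isLt
  have key : ∀ k, k ≤ n → f (S n ∪ T k) ≤ f (S n) + f (S k) := by
    intro k
    induction k with
    | zero =>
      intro _
      have hT0 : T 0 = ∅ := by simp [hTdef]
      have hS0 : S 0 = ∅ := by simp [hSdef]
      simp [hT0, hS0, hnorm]
    | succ k ih =>
      intro hk
      have hkn : k < n := hk
      have ih' := ih (le_of_lt hkn)
      set kk : Fin n := ⟨k, hkn⟩ with hkk
      have hsubset : S k ⊆ S n ∪ T k := (hSsub k).trans Finset.subset_union_left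
      have h1 := hsub (S k) (S n ∪ T k) (t (σ kk)) hsubset
      have hfk : (Finset.univ.filter (fun j : Fin n => j < kk)).image (fun j => s (σ j)) = S k := by
        rfl
      have h2 := hgreedy kk (t (σ kk)) (ht (σ kk))
      rw [hfk] at h2
      have hUnion : S n ∪ T (k + 1) = insert (t (σ kk)) (S n ∪ T k) := by
        rw [hTsucc k hkn, Finset.union_insert]
      have hS1 : f (S (k + 1)) = f (insert (s (σ kk)) (S k)) := by
        rw [hSsucc k hkn]
      rw [hUnion]
      linarith
  have hTn : T n = Finset.univ.image t := hfull t
  have hSn : S n = Finset.univ.image s := hfull s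
  have h3 : f (Finset.univ.image t) ≤ f (S n ∪ T n) := by
    rw [← hTn]
    exact hmono _ _ Finset.subset_union_right
  have h4 := key n le_rfl
  rw [hSn] at h3 h4
  linarith
end

section
/- Let f be normalized, non-decreasing, submodular, and 2nd-order submodular on subsets of the disjoint union of finite nonempty action sets V_1,…,V_n. Suppose agents select actions sequentially in order 1,…,n, where agent i greedily maximizes the marginal gain of its action conditioned only on the already-selected actions of its in-neighbors N_i^− ∩ {1,…,i−1} (i.e., s_i maximizes f(s | S_i) over s ∈ V_i, where S_i = {s_j : j < i, j ∈ N_i^−}). Define coin_i := max over s ∈ V_i and over choices x_j ∈ V_j for all non-neighbors j ∈ N_i^c of [f(s) − f(s | {x_j}_{j∈N_i^c})], where N_i^c = {1,…,n} \ (N_i^− ∪ {i}). Then f({s_1,…,s_n}) ≥ (1/2)[f(S*) − Σ_{i=1}^n coin_i], where S* is an optimal selection of one action per agent. -/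
/-- Suboptimality guarantee of the Resource-Aware distributed Greedy (RAG) algorithm,
specialized to a fixed sequential selection order `1, …, n`.  Agent `i` greedily
maximizes its marginal gain conditioned only on the already-selected actions of its
in-neighbors `Nin i`.  With `Nc i = N \ (Nin i ∪ {i})` the non-neighbors of `i`, and
`coin i` the Centralization Of Information among non-Neighbors, the selected actions
satisfy `f(S^RAG) ≥ (1/2) [f(S*) - Σ_i coin i]` for an optimal selection `S*`. -/
theorem rag_suboptimality {α : Type*} [DecidableEq α] [Fintype α] (n : ℕ)
    (Vs : Fin n → Finset α)
    (hne : ∀ i, (Vs i).Nonempty)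
    (hdisjV : ∀ i j : Fin n, i ≠ j → Disjoint (Vs i) (Vs j))
    (f : Finset α → ℝ)
    (hnorm : f ∅ = 0)
    (hmono : ∀ A B : Finset α, A ⊆ B → f A ≤ f B)
    (hsub : ∀ (A B : Finset α) (s : α), A ⊆ B →
      f (insert s B) - f B ≤ f (insert s A) - f A)
    (h2 : ∀ (A B : Finset α) (s : α), Disjoint A B →
      (f (insert s B) - f B) - (f (insert s (A ∪ B)) - f (A ∪ B))
        ≤ f {s} - (f (insert s A) - f A))
    (Nin : Fin n → Finset (Fin n))
    (Nc : Fin n → Finset (Fin n))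
    (hNc : ∀ i, Nc i = Finset.univ \ insert i (Nin i))
    (coin : Fin n → ℝ)
    (hcoin : ∀ i, coin i = sSup {r : ℝ | ∃ s' ∈ Vs i, ∃ x : Fin n → α,
      (∀ j ∈ Nc i, x j ∈ Vs j) ∧
      r = f {s'} - (f (insert s' ((Nc i).image x)) - f ((Nc i).image x))})
    (s : Fin n → α) (hs : ∀ i, s i ∈ Vs i)
    (hgreedy : ∀ i : Fin n, ∀ y ∈ Vs i,
      f (insert y ((Finset.univ.filter (fun j => j < i ∧ j ∈ Nin i)).image s))
        - f ((Finset.univ.filter (fun j => j < i ∧ j ∈ Nin i)).image s)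
      ≤ f (insert (s i) ((Finset.univ.filter (fun j => j < i ∧ j ∈ Nin i)).image s))
        - f ((Finset.univ.filter (fun j => j < i ∧ j ∈ Nin i)).image s))
    (sopt : Fin n → α) (hsopt : ∀ i, sopt i ∈ Vs i)
    (hopt : ∀ t : Fin n → α, (∀ i, t i ∈ Vs i) →
      f (Finset.univ.image t) ≤ f (Finset.univ.image sopt)) :
    (1 / 2 : ℝ) * (f (Finset.univ.image sopt) - ∑ i : Fin n, coin i)
      ≤ f (Finset.univ.image s) := by
  classical
  set S : Finset α := Finset.univ.image s with hS
  set O : Finset α := Finset.univ.image sopt with hO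
  set P : ℕ → Finset α :=
    fun k => (Finset.univ.filter (fun j : Fin n => (j : ℕ) < k)).image s with hPdef
  set Q : ℕ → Finset α :=
    fun k => S ∪ (Finset.univ.filter (fun j : Fin n => (j : ℕ) < k)).image sopt with hQdef
  have hfilter_succ : ∀ (i : Fin n),
      (Finset.univ.filter (fun j : Fin n => (j : ℕ) < (i : ℕ) + 1))
        = insert i (Finset.univ.filter (fun j : Fin n => (j : ℕ) < (i : ℕ))) := by
    intro i
    ext j
    simp only [Finset.mem_filter, Finset.mem_insert, Finset.mem_univ, true_and, Fin.ext_iff]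
    omega
  have hP0 : P 0 = ∅ := by simp [hPdef]
  have hPn : P n = S := by
    simp only [hPdef, hS]
    congr 1
    ext j
    simp [j.isLt]
  have hQ0 : Q 0 = S := by simp [hQdef]
  have hQn : Q n = S ∪ O := by
    simp only [hQdef, hO]
    congr 2
    ext j
    simp [j.isLt]
  have hPsucc : ∀ i : Fin n, P ((i : ℕ) + 1) = insert (s i) (P (i : ℕ)) := by
    intro i
    simp only [hPdef, hfilter_succ i, Finset.image_insert]
  have hQsucc : ∀ i : Fin n, Q ((i : ℕ) + 1) = insert (sopt i) (Q (i : ℕ)) := by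
    intro i
    simp only [hQdef, hfilter_succ i, Finset.image_insert, Finset.union_insert]
  -- the in-neighbor prefix set used by the greedy rule
  have key : ∀ i : Fin n,
      f (Q ((i : ℕ) + 1)) - f (Q (i : ℕ)) ≤ (f (P ((i : ℕ) + 1)) - f (P (i : ℕ))) + coin i := by
    intro i
    set T : Finset α := (Finset.univ.filter (fun j => j < i ∧ j ∈ Nin i)).image s with hTdef
    have hTS : T ⊆ S := by
      rw [hTdef, hS]
      exact Finset.image_subset_image (Finset.filter_subset _ _)
    have hTQ : T ⊆ Q (i : ℕ) := hTS.trans Finset.subset_union_left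
    have step1 : f (Q ((i : ℕ) + 1)) - f (Q (i : ℕ)) ≤ f (insert (sopt i) T) - f T := by
      rw [hQsucc i]
      exact hsub _ _ _ hTQ
    have step2 : f (insert (sopt i) T) - f T ≤ f (insert (s i) T) - f T :=
      hgreedy i (sopt i) (hsopt i)
    have hTP : T ⊆ P (i : ℕ) := by
      rw [hTdef, hPdef]
      apply Finset.image_subset_image
      intro j hj
      simp only [Finset.mem_filter, Finset.mem_univ, true_and] at hj ⊢
      exact hj.1
    set A : Finset α := P (i : ℕ) \ T with hAdef
    have hAU : A ∪ T = P (i : ℕ) := Finset.sdiff_union_of_subset hTP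
    have h2' := h2 A T (s i) Finset.sdiff_disjoint
    rw [hAU] at h2'
    -- choose a completion of the already-selected non-neighbor actions
    set x : Fin n → α := fun j => if (j : ℕ) < (i : ℕ) then s j else (hne j).choose with hxdef
    have hxV : ∀ j ∈ Nc i, x j ∈ Vs j := by
      intro j _
      simp only [hxdef]
      split_ifs
      · exact hs j
      · exact (hne j).choose_spec
    have hAX : A ⊆ (Nc i).image x := by
      intro a ha
      rw [hAdef, Finset.mem_sdiff] at ha
      obtain ⟨haP, haT⟩ := ha
      rw [hPdef] at haP
      simp only [Finset.mem_image, Finset.mem_filter, Finset.mem_univ, true_and] at haP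
      obtain ⟨j, hjlt, rfl⟩ := haP
      have hjNin : j ∉ Nin i := by
        intro hmem
        apply haT
        rw [hTdef]
        exact Finset.mem_image_of_mem s (by
          simp only [Finset.mem_filter, Finset.mem_univ, true_and]
          exact ⟨Fin.lt_def.mpr hjlt, hmem⟩)
      have hjNc : j ∈ Nc i := by
        rw [hNc i]
        simp only [Finset.mem_sdiff, Finset.mem_univ, Finset.mem_insert, true_and]
        push_neg
        refine ⟨?_, hjNin⟩
        intro h
        subst h
        omega
      refine Finset.mem_image.mpr ⟨j, hjNc, ?_⟩
      simp only [hxdef]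
      rw [if_pos hjlt]
    have step3 : f {s i} - (f (insert (s i) A) - f A)
        ≤ f {s i} - (f (insert (s i) ((Nc i).image x)) - f ((Nc i).image x)) := by
      have := hsub A ((Nc i).image x) (s i) hAX
      linarith
    have step4 : f {s i} - (f (insert (s i) ((Nc i).image x)) - f ((Nc i).image x)) ≤ coin i := by
      rw [hcoin i]
      have hfin : ({r : ℝ | ∃ s' ∈ Vs i, ∃ x : Fin n → α,
          (∀ j ∈ Nc i, x j ∈ Vs j) ∧
          r = f {s'} - (f (insert s' ((Nc i).image x)) - f ((Nc i).image x))}).Finite := by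
        apply Set.Finite.subset (Set.finite_range
          (fun p : α × (Fin n → α) =>
            f {p.1} - (f (insert p.1 ((Nc i).image p.2)) - f ((Nc i).image p.2))))
        rintro r ⟨s', -, x', -, rfl⟩
        exact ⟨(s', x'), rfl⟩
      exact le_csSup hfin.bddAbove ⟨s i, hs i, x, hxV, rfl⟩
    have hPstep : P ((i : ℕ) + 1) = insert (s i) (P (i : ℕ)) := hPsucc i
    rw [hPstep]
    linarith
  have sumQ : ∑ k ∈ Finset.range n, (f (Q (k + 1)) - f (Q k)) = f (Q n) - f (Q 0) :=
    Finset.sum_range_sub (fun k => f (Q k)) n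
  have sumP : ∑ k ∈ Finset.range n, (f (P (k + 1)) - f (P k)) = f (P n) - f (P 0) :=
    Finset.sum_range_sub (fun k => f (P k)) n
  have hsumle : ∑ i : Fin n, (f (Q ((i : ℕ) + 1)) - f (Q (i : ℕ)))
      ≤ ∑ i : Fin n, ((f (P ((i : ℕ) + 1)) - f (P (i : ℕ))) + coin i) :=
    Finset.sum_le_sum (fun i _ => key i)
  rw [Fin.sum_univ_eq_sum_range (fun k => f (Q (k + 1)) - f (Q k)) n] at hsumle
  rw [Finset.sum_add_distrib,
    Fin.sum_univ_eq_sum_range (fun k => f (P (k + 1)) - f (P k)) n] at hsumle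
  rw [sumQ, sumP, hP0, hPn, hQ0, hQn, hnorm] at hsumle
  have hOle : f O ≤ f (S ∪ O) := hmono O (S ∪ O) Finset.subset_union_right
  linarith
end

section
/- For the planar disk-coverage model with sensing radius r_s and communication radius r_i: if every non-neighbor of agent i lies at distance at least r_i from agent i, then for any action of agent i and any actions of its non-neighbors, the overlap f(s_i) − f(s_i | S_{N_i^c}) is at most the area of the set of points within distance r_s of agent i's position and also within distance r_s of some point at distance ≥ r_i from agent i; in particular, when r_i ≥ 2r_s this bound is 0, and in general the overlap is at most max(0, π[r_s² − (r_i − r_s)²]) when r_s ≤ r_i ≤ 2r_s. -/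
open MeasureTheory Metric

lemma vol_closedBall2 (x : EuclideanSpace ℝ (Fin 2)) (r : ℝ) :
    volume (closedBall x r) = ENNReal.ofReal r ^ 2 * ENNReal.ofReal Real.pi := by
  rw [EuclideanSpace.volume_closedBall, Fintype.card_fin]
  congr 1
  rw [show ((2:ℕ):ℝ)/2 + 1 = 2 by norm_num, Real.Gamma_two,
    Real.sq_sqrt Real.pi_pos.le, div_one]

lemma vol_ball2 (x : EuclideanSpace ℝ (Fin 2)) (r : ℝ) :
    volume (ball x r) = ENNReal.ofReal r ^ 2 * ENNReal.ofReal Real.pi := by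
  rw [← Measure.addHaar_closedBall_eq_addHaar_ball, vol_closedBall2]

/-- Planar disk-coverage model with sensing radius `rs` and communication radius `ri`:
if every non-neighbor of agent `i` lies at distance at least `ri` from `i`, then the
information overlap `f(s_i) - f(s_i | S_{N_i^c}) = area(D_i ∩ ⋃_j D_j)` is at most the
area of the set of points within distance `rs` of `p` that are also within distance
`rs` of some point at distance `≥ ri` from `p`; in particular, when `ri ≥ 2 rs` the
overlap is `0`, and when `rs ≤ ri ≤ 2 rs` the overlap is at most
`π [rs² - (ri - rs)²]`. -/
theorem disk_overlap_annulus_bound {ι : Type*} [Fintype ι]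
    (rs ri : ℝ) (hrs : 0 < rs)
    (p : EuclideanSpace ℝ (Fin 2)) (q : ι → EuclideanSpace ℝ (Fin 2))
    (hfar : ∀ j, ri ≤ dist p (q j)) :
    volume (closedBall p rs ∩ ⋃ j, closedBall (q j) rs)
      ≤ volume {x : EuclideanSpace ℝ (Fin 2) | x ∈ closedBall p rs ∧
          ∃ y : EuclideanSpace ℝ (Fin 2), ri ≤ dist p y ∧ dist x y ≤ rs}
    ∧ (2 * rs ≤ ri →
        volume (closedBall p rs ∩ ⋃ j, closedBall (q j) rs) = 0)
    ∧ (rs ≤ ri → ri ≤ 2 * rs →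
        volume (closedBall p rs ∩ ⋃ j, closedBall (q j) rs)
          ≤ ENNReal.ofReal (Real.pi * (rs ^ 2 - (ri - rs) ^ 2))) := by
  have hsub : ∀ x, x ∈ closedBall p rs ∩ ⋃ j, closedBall (q j) rs →
      x ∈ closedBall p rs ∧ ri - rs ≤ dist p x := by
    rintro x ⟨hx, hxU⟩
    rcases Set.mem_iUnion.1 hxU with ⟨j, hj⟩
    refine ⟨hx, ?_⟩
    have h1 : ri ≤ dist p (q j) := hfar j
    have h2 : dist x (q j) ≤ rs := mem_closedBall.1 hj
    have := dist_triangle p x (q j)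
    linarith
  refine ⟨?_, ?_, ?_⟩
  · apply measure_mono
    rintro x ⟨hx, hxU⟩
    rcases Set.mem_iUnion.1 hxU with ⟨j, hj⟩
    exact ⟨hx, q j, hfar j, mem_closedBall.1 hj⟩
  · intro h
    have hsph : (closedBall p rs ∩ ⋃ j, closedBall (q j) rs) ⊆ sphere p rs := by
      intro x hx
      obtain ⟨hx1, hx2⟩ := hsub x hx
      have := mem_closedBall'.1 hx1
      simp only [mem_sphere, dist_comm x p]
      linarith
    exact measure_mono_null hsph (Measure.addHaar_sphere volume p rs)
  · intro h1 h2
    have hsub2 : (closedBall p rs ∩ ⋃ j, closedBall (q j) rs) ⊆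
        closedBall p rs \ ball p (ri - rs) := by
      intro x hx
      obtain ⟨hx1, hx2⟩ := hsub x hx
      refine ⟨hx1, fun hxb => ?_⟩
      rw [mem_ball, dist_comm] at hxb
      linarith
    refine le_trans (measure_mono hsub2) ?_
    rw [measure_diff (ball_subset_closedBall.trans (closedBall_subset_closedBall (by linarith))) measurableSet_ball.nullMeasurableSet
      (by rw [vol_ball2]; exact ENNReal.mul_ne_top (by simp) (by simp))]
    rw [vol_closedBall2, vol_ball2]
    rw [← ENNReal.sub_mul (by simp), ← ENNReal.ofReal_pow hrs.le,
      ← ENNReal.ofReal_pow (by linarith), ← ENNReal.ofReal_sub _ (by positivity),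
      ← ENNReal.ofReal_mul (by nlinarith)]
    rw [mul_comm]
end

section
/- If f is a normalized, non-decreasing, submodular function and the agents N can be partitioned into groups such that actions of agents in different groups are 'independent' (i.e., f is additive across groups: f(A) = Σ_g f(A ∩ V_g) for any selection A), then running RAG separately within each group (fully disconnected across groups, fully connected within groups) yields f(S^RAG) ≥ (1/2) f(S*). -/
/-!
Let `S` be the greedy selection and `T` any feasible one, and let `P i` be the picks of the agents
that precede `i` in its own group. By monotonicity and submodularity (`P i ⊆ S`),
`f T ≤ f (S ∪ T) ≤ f S + ∑ i, Δ(T i | P i)`, and the greedy choice gives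
`Δ(T i | P i) ≤ Δ(S i | P i)`. Within a group the greedy marginals telescope to the value of that
group's picks, so additivity across groups turns `∑ i, Δ(S i | P i)` into `f S`. Hence
`f T ≤ 2 f S`.
-/

open Finset Function

section

variable {α ι : Type*} [DecidableEq α]

def marginal (f : Finset α → ℝ) (A : Finset α) (x : α) : ℝ := f (insert x A) - f A

theorem le_add_sum_marginal_of_submodular (f : Finset α → ℝ)
    (hsub : ∀ (A B : Finset α) (x : α), A ⊆ B → marginal f B x ≤ marginal f A x)
    (S : Finset α) (t : ι → α) (P : ι → Finset α) (hP : ∀ i, P i ⊆ S) (I : Finset ι) :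
    f (S ∪ I.image t) ≤ f S + ∑ i ∈ I, marginal f (P i) (t i) := by
  classical
  induction I using Finset.induction_on with
  | empty => simp
  | insert j I hj ih =>
    have hj_le := hsub (P j) (S ∪ I.image t) (t j) ((hP j).trans subset_union_left)
    rw [image_insert, union_insert, sum_insert hj]
    simp only [marginal] at hj_le ih ⊢
    linarith

theorem Finset.sum_filter_le_sub_filter_lt {M : Type*} [AddCommGroup M] [LinearOrder ι]
    (h : Finset ι → M) (C : Finset ι) :
    ∑ j ∈ C, (h (C.filter (· ≤ j)) - h (C.filter (· < j))) = h C - h ∅ := by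
  induction C using Finset.induction_on_max with
  | empty => simp
  | insert a C hlt ih =>
    have ha : a ∉ C := fun ha => lt_irrefl a (hlt a ha)
    have hle_a : (insert a C).filter (· ≤ a) = insert a C :=
      filter_true_of_mem fun j hj => by
        rcases mem_insert.1 hj with rfl | hj
        exacts [le_rfl, (hlt j hj).le]
    have hlt_a : (insert a C).filter (· < a) = C := by
      rw [filter_insert, if_neg (lt_irrefl a)]
      exact filter_true_of_mem hlt
    rw [sum_insert ha, hle_a, hlt_a, sum_congr rfl fun j hj => by
      rw [filter_insert, filter_insert, if_neg (not_le.2 (hlt j hj)),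
        if_neg (lt_asymm (hlt j hj))], ih]
    abel

theorem Finset.filter_le_eq_insert_filter_lt [LinearOrder ι] {C : Finset ι} {i : ι}
    (hi : i ∈ C) : C.filter (· ≤ i) = insert i (C.filter (· < i)) := by
  ext j
  simp only [mem_filter, mem_insert, le_iff_lt_or_eq]
  grind

theorem filter_mem_biUnion_image_univ [Fintype ι] {Vs : ι → Finset α}
    (hdisj : Pairwise (Disjoint on Vs)) {s : ι → α} (hs : ∀ i, s i ∈ Vs i) (I : Finset ι) :
    (univ.image s).filter (· ∈ I.biUnion Vs) = I.image s := by
  ext x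
  simp only [mem_filter, mem_image, mem_biUnion, mem_univ, true_and]
  constructor
  · rintro ⟨⟨j, rfl⟩, i, hi, hji⟩
    obtain rfl : i = j := by_contra fun hij => disjoint_left.1 (hdisj hij) hji (hs j)
    exact ⟨i, hi, rfl⟩
  · rintro ⟨j, hj, rfl⟩
    exact ⟨⟨j, rfl⟩, j, hj, hs j⟩

theorem sum_marginal_prefix_eq_of_additive {G : Type*} [Fintype ι] [LinearOrder ι] [DecidableEq G]
    [Fintype G] (f : Finset α → ℝ) (hnorm : f ∅ = 0) {Vs : ι → Finset α}
    (hdisj : Pairwise (Disjoint on Vs)) (grp : ι → G)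
    (hadd : ∀ A : Finset α, f A = ∑ g : G,
      f (A.filter (fun a => a ∈ (univ.filter (fun i => grp i = g)).biUnion Vs)))
    {s : ι → α} (hs : ∀ i, s i ∈ Vs i) :
    ∑ i, marginal f ((univ.filter (fun j => j < i ∧ grp j = grp i)).image s) (s i)
      = f (univ.image s) := by
  set C : G → Finset ι := fun g => univ.filter (fun i => grp i = g)
  have hprefix : ∀ g, ∀ i ∈ C g,
      univ.filter (fun j => j < i ∧ grp j = grp i) = (C g).filter (· < i) := fun g i hi => by
    rw [(mem_filter.1 hi).2, filter_filter]
    simp only [and_comm]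
  calc ∑ i, marginal f ((univ.filter (fun j => j < i ∧ grp j = grp i)).image s) (s i)
      = ∑ g, ∑ i ∈ C g,
          (f (((C g).filter (· ≤ i)).image s) - f (((C g).filter (· < i)).image s)) := by
        rw [← sum_fiberwise univ grp]
        refine sum_congr rfl fun g _ => sum_congr rfl fun i hi => ?_
        rw [filter_le_eq_insert_filter_lt hi, image_insert, ← hprefix g i hi, marginal]
    _ = ∑ g, f ((C g).image s) := by
        simp_rw [sum_filter_le_sub_filter_lt (fun J => f (J.image s)), image_empty, hnorm,
          sub_zero]
    _ = f (univ.image s) := by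
        rw [hadd]
        simp_rw [filter_mem_biUnion_image_univ hdisj hs]
        rfl

end

theorem rag_group_additive_half_general {α G : Type*} [DecidableEq α]
    [DecidableEq G] [Fintype G] (n : ℕ)
    (Vs : Fin n → Finset α)
    (hdisjV : ∀ i j : Fin n, i ≠ j → Disjoint (Vs i) (Vs j))
    (grp : Fin n → G)
    (f : Finset α → ℝ)
    (hnorm : f ∅ = 0)
    (hmono : ∀ A B : Finset α, A ⊆ B → f A ≤ f B)
    (hsub : ∀ (A B : Finset α) (s : α), A ⊆ B →
      f (insert s B) - f B ≤ f (insert s A) - f A)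
    (hadd : ∀ A : Finset α, f A = ∑ g : G,
      f (A.filter (fun a => a ∈ (Finset.univ.filter (fun i => grp i = g)).biUnion Vs)))
    (s : Fin n → α) (hs : ∀ i, s i ∈ Vs i)
    (hgreedy : ∀ i : Fin n, ∀ y ∈ Vs i,
      f (insert y ((Finset.univ.filter (fun j => j < i ∧ grp j = grp i)).image s))
        - f ((Finset.univ.filter (fun j => j < i ∧ grp j = grp i)).image s)
      ≤ f (insert (s i) ((Finset.univ.filter (fun j => j < i ∧ grp j = grp i)).image s))
        - f ((Finset.univ.filter (fun j => j < i ∧ grp j = grp i)).image s))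
    (sopt : Fin n → α) (hsopt : ∀ i, sopt i ∈ Vs i) :
    (1 / 2 : ℝ) * f (Finset.univ.image sopt) ≤ f (Finset.univ.image s) := by
  set P : Fin n → Finset α := fun i =>
    (univ.filter (fun j => j < i ∧ grp j = grp i)).image s
  have hgreedy_sum : ∑ i, marginal f (P i) (s i) = f (univ.image s) :=
    sum_marginal_prefix_eq_of_additive f hnorm (fun i j => hdisjV i j) grp hadd hs
  have hopt_le : f (univ.image sopt) ≤ f (univ.image s) + ∑ i, marginal f (P i) (sopt i) :=
    (hmono _ _ subset_union_right).trans <| le_add_sum_marginal_of_submodular f hsub _ sopt P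
      (fun i => image_subset_image (filter_subset _ _)) univ
  have hmarginal_le : ∑ i, marginal f (P i) (sopt i) ≤ ∑ i, marginal f (P i) (s i) :=
    sum_le_sum fun i _ => hgreedy i (sopt i) (hsopt i)
  linarith

/-- If `f` is normalized, non-decreasing and submodular, and the agents are partitioned
into groups across which `f` is additive (`f(A) = Σ_g f(A ∩ V_g)`), then running RAG
separately within each group (fully disconnected across groups, fully connected within
groups, i.e., sequential greedy within each group) yields `f(S^RAG) ≥ (1/2) f(S*)`. -/
theorem rag_group_additive_half {α G : Type*} [DecidableEq α] [Fintype α]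
    [DecidableEq G] [Fintype G] (n : ℕ)
    (Vs : Fin n → Finset α)
    (hne : ∀ i, (Vs i).Nonempty)
    (hdisjV : ∀ i j : Fin n, i ≠ j → Disjoint (Vs i) (Vs j))
    (grp : Fin n → G)
    (f : Finset α → ℝ)
    (hnorm : f ∅ = 0)
    (hmono : ∀ A B : Finset α, A ⊆ B → f A ≤ f B)
    (hsub : ∀ (A B : Finset α) (s : α), A ⊆ B →
      f (insert s B) - f B ≤ f (insert s A) - f A)
    (hadd : ∀ A : Finset α, f A = ∑ g : G,
      f (A.filter (fun a => a ∈ (Finset.univ.filter (fun i => grp i = g)).biUnion Vs)))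
    (s : Fin n → α) (hs : ∀ i, s i ∈ Vs i)
    (hgreedy : ∀ i : Fin n, ∀ y ∈ Vs i,
      f (insert y ((Finset.univ.filter (fun j => j < i ∧ grp j = grp i)).image s))
        - f ((Finset.univ.filter (fun j => j < i ∧ grp j = grp i)).image s)
      ≤ f (insert (s i) ((Finset.univ.filter (fun j => j < i ∧ grp j = grp i)).image s))
        - f ((Finset.univ.filter (fun j => j < i ∧ grp j = grp i)).image s))
    (sopt : Fin n → α) (hsopt : ∀ i, sopt i ∈ Vs i)
    (hopt : ∀ t : Fin n → α, (∀ i, t i ∈ Vs i) →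
      f (Finset.univ.image t) ≤ f (Finset.univ.image sopt)) :
    (1 / 2 : ℝ) * f (Finset.univ.image sopt) ≤ f (Finset.univ.image s) :=
  rag_group_additive_half_general n Vs hdisjV grp f hnorm hmono hsub hadd s hs hgreedy sopt hsopt
end

section
/- For the sequential greedy with full information (each agent i conditions on all previously selected actions) on a normalized, non-decreasing submodular f with one action per agent, the following per-step domination holds: f(s_i | {s_1,…,s_{i−1}}) ≥ f(s_i* | {s_1,…,s_{i−1}}) for every i, where s_i* is agent i's action in an optimal solution; summing and using submodularity yields f(S^greedy) ≥ f(S*) − f(S^greedy), i.e., the 1/2 bound. -/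
/-!
Comparing agent `i`'s optimal action with the whole greedy set `S`, submodularity and the greedy
choice give `f(s_i* | S) ≤ f(s_i* | {s_1,…,s_{i-1}}) ≤ f(s_i | {s_1,…,s_{i-1}})`. Summing,
the left side bounds `f(S ∪ S*) - f(S)` by the union bound for submodular functions, and the
right side telescopes to `f(S) - f(∅)`.
-/

open Finset

section

variable {α : Type*} [DecidableEq α]

def prefixImage {n : ℕ} (g : Fin n → α) (k : ℕ) : Finset α :=
  (univ.filter fun j : Fin n => (j : ℕ) < k).image g

@[simp]
theorem prefixImage_zero {n : ℕ} (g : Fin n → α) : prefixImage g 0 = ∅ := by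
  simp [prefixImage]

@[simp]
theorem prefixImage_length {n : ℕ} (g : Fin n → α) : prefixImage g n = univ.image g := by
  simp [prefixImage]

theorem prefixImage_succ {n : ℕ} (g : Fin n → α) (i : Fin n) :
    prefixImage g (i + 1) = insert (g i) (prefixImage g i) := by
  have hfilter : (univ.filter fun j : Fin n => (j : ℕ) < i + 1)
      = insert i (univ.filter fun j : Fin n => (j : ℕ) < i) := by
    ext j
    simp only [mem_filter, mem_univ, true_and, mem_insert, Fin.ext_iff]
    omega
  rw [prefixImage, hfilter, image_insert, prefixImage]

theorem sum_marginal_prefix_eq_sub (f : Finset α → ℝ) {n : ℕ} (g : Fin n → α) :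
    ∑ i : Fin n, (f (insert (g i) ((univ.filter (fun j => j < i)).image g))
        - f ((univ.filter (fun j => j < i)).image g))
      = f (univ.image g) - f ∅ := by
  set F : ℕ → ℝ := fun k => f (prefixImage g k)
  calc _ = ∑ i : Fin n, (F (i + 1) - F i) := by
        refine Fintype.sum_congr _ _ fun i => ?_
        simp only [F, prefixImage_succ]
        rfl
    _ = F n - F 0 := by
        rw [Fin.sum_univ_eq_sum_range (fun k => F (k + 1) - F k), sum_range_sub]
    _ = f (univ.image g) - f ∅ := by simp only [F, prefixImage_length, prefixImage_zero]

theorem sub_le_sum_marginal_of_submodular {f : Finset α → ℝ}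
    (hsub : ∀ (A B : Finset α) (s : α), A ⊆ B → f (insert s B) - f B ≤ f (insert s A) - f A)
    {ι : Type*} [DecidableEq ι] (B : Finset α) (t : ι → α) (I : Finset ι) :
    f (B ∪ I.image t) - f B ≤ ∑ i ∈ I, (f (insert (t i) B) - f B) := by
  induction I using Finset.induction_on with
  | empty => simp
  | insert a I ha ih =>
    have hgain : f (insert (t a) (B ∪ I.image t)) - f (B ∪ I.image t)
        ≤ f (insert (t a) B) - f B :=
      hsub B _ (t a) subset_union_left
    rw [image_insert, union_insert, sum_insert ha]
    linarith

end

theorem greedy_per_step_domination_general {α : Type*} [DecidableEq α] (n : ℕ)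
    (Vs : Fin n → Finset α)
    (f : Finset α → ℝ)
    (hnorm : f ∅ = 0)
    (hmono : ∀ A B : Finset α, A ⊆ B → f A ≤ f B)
    (hsub : ∀ (A B : Finset α) (s : α), A ⊆ B →
      f (insert s B) - f B ≤ f (insert s A) - f A)
    (s : Fin n → α)
    (hgreedy : ∀ i : Fin n, ∀ y ∈ Vs i,
      f (insert y ((Finset.univ.filter (fun j => j < i)).image s))
        - f ((Finset.univ.filter (fun j => j < i)).image s)
      ≤ f (insert (s i) ((Finset.univ.filter (fun j => j < i)).image s))
        - f ((Finset.univ.filter (fun j => j < i)).image s))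
    (sopt : Fin n → α) (hsopt : ∀ i, sopt i ∈ Vs i) :
    (∀ i : Fin n,
      f (insert (sopt i) ((Finset.univ.filter (fun j => j < i)).image s))
        - f ((Finset.univ.filter (fun j => j < i)).image s)
      ≤ f (insert (s i) ((Finset.univ.filter (fun j => j < i)).image s))
        - f ((Finset.univ.filter (fun j => j < i)).image s)) ∧
    f (Finset.univ.image sopt) - f (Finset.univ.image s) ≤ f (Finset.univ.image s) := by
  have hstep i := hgreedy i (sopt i) (hsopt i)
  refine ⟨hstep, ?_⟩
  set S := univ.image s
  have hgain_le_step (i : Fin n) : f (insert (sopt i) S) - f S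
      ≤ f (insert (s i) ((univ.filter (fun j => j < i)).image s))
        - f ((univ.filter (fun j => j < i)).image s) :=
    (hsub _ S _ (image_subset_image (subset_univ _))).trans (hstep i)
  calc f (univ.image sopt) - f S ≤ f (S ∪ univ.image sopt) - f S := by
        linarith [hmono _ _ (subset_union_right (s₁ := S) (s₂ := univ.image sopt))]
    _ ≤ ∑ i, (f (insert (sopt i) S) - f S) := sub_le_sum_marginal_of_submodular hsub S sopt univ
    _ ≤ _ := sum_le_sum fun i _ => hgain_le_step i
    _ = f S := by rw [sum_marginal_prefix_eq_sub, hnorm, sub_zero]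

/-- Per-step domination for the full-information sequential greedy: for each `i`,
`f(s_i | {s_1,…,s_{i-1}}) ≥ f(s_i* | {s_1,…,s_{i-1}})` where `s*` is any feasible
(in particular an optimal) selection; and consequently
`f(S^greedy) ≥ f(S*) - f(S^greedy)`, i.e., the 1/2 bound. -/
theorem greedy_per_step_domination {α : Type*} [DecidableEq α] [Fintype α] (n : ℕ)
    (Vs : Fin n → Finset α)
    (hne : ∀ i, (Vs i).Nonempty)
    (hdisjV : ∀ i j : Fin n, i ≠ j → Disjoint (Vs i) (Vs j))
    (f : Finset α → ℝ)
    (hnorm : f ∅ = 0)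
    (hmono : ∀ A B : Finset α, A ⊆ B → f A ≤ f B)
    (hsub : ∀ (A B : Finset α) (s : α), A ⊆ B →
      f (insert s B) - f B ≤ f (insert s A) - f A)
    (s : Fin n → α) (hs : ∀ i, s i ∈ Vs i)
    (hgreedy : ∀ i : Fin n, ∀ y ∈ Vs i,
      f (insert y ((Finset.univ.filter (fun j => j < i)).image s))
        - f ((Finset.univ.filter (fun j => j < i)).image s)
      ≤ f (insert (s i) ((Finset.univ.filter (fun j => j < i)).image s))
        - f ((Finset.univ.filter (fun j => j < i)).image s))
    (sopt : Fin n → α) (hsopt : ∀ i, sopt i ∈ Vs i) :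
    (∀ i : Fin n,
      f (insert (sopt i) ((Finset.univ.filter (fun j => j < i)).image s))
        - f ((Finset.univ.filter (fun j => j < i)).image s)
      ≤ f (insert (s i) ((Finset.univ.filter (fun j => j < i)).image s))
        - f ((Finset.univ.filter (fun j => j < i)).image s)) ∧
    f (Finset.univ.image sopt) - f (Finset.univ.image s) ≤ f (Finset.univ.image s) :=
  greedy_per_step_domination_general n Vs f hnorm hmono hsub s hgreedy sopt hsopt
end
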